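/- arXiv:1306.1912 — 4 statements merged into one kernel-verified Lean document; each statement's English description precedes it below -/
import Mathlib

section
/- Let H and K be complex Hilbert spaces, let U₀ be a unitary operator on H, and let G : H → K be a bounded operator with ‖G‖ ≤ 1. Define Θ := 2·arcsin(G*G) via the continuous functional calculus (G*G is a positive contraction, so Θ is a bounded self-adjoint operator on H with spectrum in [0,π)), U₁ := exp(iΘ/2) ∘ U₀ ∘ exp(iΘ/2) (a unitary operator on H), and α := (I − (GG*)²)^{1/2} on K (via the functional calculus, since I − (GG*)² ≥ 0). For j = 0,1 and z ∈ ℂ with |z| ≠ 1, the operator U_j − z·I is invertible, and setting ψ_j(z) := i·G (U_j + z)(U_j − z)⁻¹ G*, the identities (α + ψ₀(z))(α − ψ₁(z)) = I and (α − ψ₁(z))(α + ψ₀(z)) = I hold for every z ∈ ℂ with |z| ≠ 1. -/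
noncomputable section

variable {H K : Type*} [NormedAddCommGroup H] [InnerProductSpace ℂ H] [CompleteSpace H]
  [NormedAddCommGroup K] [InnerProductSpace ℂ K] [CompleteSpace K]

/-- `Θ = 2·arcsin(G*G)`, via the continuous functional calculus. -/
def Theta (G : H →L[ℂ] K) : H →L[ℂ] H :=
  (2 : ℝ) • cfc Real.arcsin ((ContinuousLinearMap.adjoint G).comp G)

/-- `U₁ = exp(iΘ/2) U₀ exp(iΘ/2)`. -/
def U1 (U₀ : H →L[ℂ] H) (G : H →L[ℂ] K) : H →L[ℂ] H :=
  NormedSpace.exp ((Complex.I / 2) • Theta G) * U₀ *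
    NormedSpace.exp ((Complex.I / 2) • Theta G)

/-- `α = (I − (GG*)²)^{1/2}`, via the continuous functional calculus. -/
def alphaOp (G : H →L[ℂ] K) : K →L[ℂ] K :=
  cfc Real.sqrt ((1 : K →L[ℂ] K) - (G.comp (ContinuousLinearMap.adjoint G)) ^ 2)

/-- `ψ(z) = i G (U + z)(U − z)⁻¹ G*`. -/
def psi (G : H →L[ℂ] K) (U : H →L[ℂ] H) (z : ℂ) : K →L[ℂ] K :=
  Complex.I • ((G.comp ((U + z • 1) * Ring.inverse (U - z • 1))).comp
    (ContinuousLinearMap.adjoint G))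

/-! ### Auxiliary material -/

/-- `G*G`. -/
def opA (G : H →L[ℂ] K) : H →L[ℂ] H := (ContinuousLinearMap.adjoint G).comp G

/-- `GG*`. -/
def opB (G : H →L[ℂ] K) : K →L[ℂ] K := G.comp (ContinuousLinearMap.adjoint G)

/-- The sandwich map `X ↦ G X G*`. -/
def sandw (G : H →L[ℂ] K) (X : H →L[ℂ] H) : K →L[ℂ] K :=
  (G.comp X).comp (ContinuousLinearMap.adjoint G)

theorem Theta_eq (G : H →L[ℂ] K) : Theta G = (2 : ℝ) • cfc Real.arcsin (opA G) := rfl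

theorem alphaOp_eq (G : H →L[ℂ] K) : alphaOp G = cfc Real.sqrt (1 - opB G ^ 2) := rfl

theorem psi_eq (G : H →L[ℂ] K) (U : H →L[ℂ] H) (z : ℂ) :
    psi G U z = Complex.I • sandw G ((U + z • 1) * Ring.inverse (U - z • 1)) := rfl

open ContinuousLinearMap in
theorem intertwine_pow (G : H →L[ℂ] K) (X : H →L[ℂ] H) (Y : K →L[ℂ] K)
    (h : G.comp X = Y.comp G) (n : ℕ) : G.comp (X ^ n) = (Y ^ n).comp G := by
  induction n with
  | zero => simp [pow_zero, ContinuousLinearMap.one_def]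
  | succ n ih =>
    rw [pow_succ, pow_succ, ContinuousLinearMap.mul_def, ContinuousLinearMap.mul_def,
      ← ContinuousLinearMap.comp_assoc, ih, ContinuousLinearMap.comp_assoc, h,
      ← ContinuousLinearMap.comp_assoc]

open ContinuousLinearMap in
theorem intertwine_aeval (G : H →L[ℂ] K) (X : H →L[ℂ] H) (Y : K →L[ℂ] K)
    (h : G.comp X = Y.comp G) (p : Polynomial ℝ) :
    G.comp (Polynomial.aeval X p) = (Polynomial.aeval Y p).comp G := by
  induction p using Polynomial.induction_on' with
  | add p q hp hq =>
    simp only [map_add, ContinuousLinearMap.add_comp, ContinuousLinearMap.comp_add, hp, hq]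
  | monomial n a =>
    simp only [Polynomial.aeval_monomial, Algebra.algebraMap_eq_smul_one, smul_mul_assoc, one_mul]
    rw [ContinuousLinearMap.comp_smul, ContinuousLinearMap.smul_comp, intertwine_pow G X Y h n]

open ContinuousLinearMap in
theorem intertwine_cfc (G : H →L[ℂ] K) (X : H →L[ℂ] H) (Y : K →L[ℂ] K)
    (hX : IsSelfAdjoint X) (hY : IsSelfAdjoint Y)
    (h : G.comp X = Y.comp G) (f : ℝ → ℝ) (hf : Continuous f) :
    G.comp (cfc f X) = (cfc f Y).comp G := by
  rcases subsingleton_or_nontrivial H with hH | hH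
  · apply Subsingleton.elim
  have hne : Nontrivial (H →L[ℂ] H) := ⟨1, 0, fun hc => by
    obtain ⟨x, hx⟩ := exists_ne (0 : H)
    exact hx (by simpa using DFunLike.congr_fun hc x)⟩
  set M : ℝ := max ‖X‖ ‖Y‖ with hM
  have hMX : spectrum ℝ X ⊆ Set.Icc (-M) M := fun x hx => by
    have := spectrum.norm_le_norm_of_mem hx
    rw [Real.norm_eq_abs] at this
    have : |x| ≤ M := this.trans (le_max_left _ _)
    exact Set.mem_Icc.mpr (abs_le.mp this)
  have hMY : spectrum ℝ Y ⊆ Set.Icc (-M) M := by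
    rcases subsingleton_or_nontrivial K with hK | hK
    · intro x hx
      exact absurd (isUnit_of_subsingleton _) (spectrum.mem_iff.mp hx)
    · have : Nontrivial (K →L[ℂ] K) := ⟨1, 0, fun hc => by
        obtain ⟨x, hx⟩ := exists_ne (0 : K)
        exact hx (by simpa using DFunLike.congr_fun hc x)⟩
      intro x hx
      have := spectrum.norm_le_norm_of_mem hx
      rw [Real.norm_eq_abs] at this
      have : |x| ≤ M := this.trans (le_max_right _ _)
      exact Set.mem_Icc.mpr (abs_le.mp this)
  have key : ∀ ε : ℝ, 0 < ε → ‖G.comp (cfc f X) - (cfc f Y).comp G‖ ≤ ε := by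
    intro ε hε
    set δ : ℝ := ε / (2 * (‖G‖ + 1)) with hδdef
    have hδ : 0 < δ := by positivity
    set s : Set ℝ := Set.Icc (-M) M with hs
    set F : C(s, ℝ) := ContinuousMap.restrict s ⟨f, hf⟩ with hF
    have hmem : F ∈ closure ((polynomialFunctions s : Set C(s, ℝ))) := by
      have h1 : F ∈ (polynomialFunctions (Set.Icc (-M) M)).topologicalClosure := by
        rw [polynomialFunctions_closure_eq_top (-M) M]; trivial
      exact h1
    obtain ⟨g, hgmem, hgdist⟩ := Metric.mem_closure_iff.mp hmem δ hδ
    rw [polynomialFunctions_coe] at hgmem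
    obtain ⟨p, rfl⟩ := hgmem
    have happrox : ∀ x ∈ s, |f x - p.eval x| ≤ δ := by
      intro x hx
      have h1 := ContinuousMap.dist_apply_le_dist
        (f := F) (g := p.toContinuousMapOnAlgHom s) ⟨x, hx⟩
      have h2 : dist (F ⟨x, hx⟩) ((p.toContinuousMapOnAlgHom s) ⟨x, hx⟩) ≤ δ :=
        h1.trans hgdist.le
      simpa [hF, Real.dist_eq, Polynomial.toContinuousMapOnAlgHom] using h2
    have hXd : ‖cfc f X - cfc (fun x => p.eval x) X‖ ≤ δ := by
      rw [← cfc_sub f (fun x => p.eval x) X (hf.continuousOn)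
        (p.continuous_aeval).continuousOn]
      exact norm_cfc_le hδ.le fun x hx => by
        simpa [Real.norm_eq_abs] using happrox x (hMX hx)
    have hYd : ‖cfc (fun x => p.eval x) Y - cfc f Y‖ ≤ δ := by
      rw [← cfc_sub (fun x => p.eval x) f Y (p.continuous_aeval).continuousOn hf.continuousOn]
      exact norm_cfc_le hδ.le fun x hx => by
        have := happrox x (hMY hx)
        rw [abs_sub_comm] at this
        simpa [Real.norm_eq_abs] using this
    have hmid : G.comp (cfc (fun x => p.eval x) X) = (cfc (fun x => p.eval x) Y).comp G := by
      rw [cfc_polynomial p X hX, cfc_polynomial p Y hY]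
      exact intertwine_aeval G X Y h p
    have hsplit : G.comp (cfc f X) - (cfc f Y).comp G
        = G.comp (cfc f X - cfc (fun x => p.eval x) X)
          + (cfc (fun x => p.eval x) Y - cfc f Y).comp G := by
      rw [ContinuousLinearMap.comp_sub, ContinuousLinearMap.sub_comp, hmid]
      abel
    calc ‖G.comp (cfc f X) - (cfc f Y).comp G‖
        ≤ ‖G.comp (cfc f X - cfc (fun x => p.eval x) X)‖
          + ‖(cfc (fun x => p.eval x) Y - cfc f Y).comp G‖ := by
            rw [hsplit]; exact norm_add_le _ _
      _ ≤ ‖G‖ * δ + δ * ‖G‖ := by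
          gcongr
          · exact (ContinuousLinearMap.opNorm_comp_le _ _).trans
              (mul_le_mul_of_nonneg_left hXd (norm_nonneg _))
          · exact (ContinuousLinearMap.opNorm_comp_le _ _).trans
              (mul_le_mul_of_nonneg_right hYd (norm_nonneg _))
      _ ≤ ε := by
          have h1 : ‖G‖ * δ + δ * ‖G‖ = (2 * ‖G‖) * δ := by ring
          rw [h1, hδdef]
          calc (2 * ‖G‖) * (ε / (2 * (‖G‖ + 1)))
              ≤ (2 * (‖G‖ + 1)) * (ε / (2 * (‖G‖ + 1))) :=
                mul_le_mul_of_nonneg_right (by linarith [norm_nonneg G]) (by positivity)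
            _ = ε := by field_simp
  have h0 : ‖G.comp (cfc f X) - (cfc f Y).comp G‖ ≤ 0 :=
    le_of_forall_pos_le_add fun ε hε => by simpa using key ε hε
  exact sub_eq_zero.mp (norm_le_zero_iff.mp h0)

open Complex in
theorem exp_I_smul_selfAdjoint (S : H →L[ℂ] H) (hS : IsSelfAdjoint S) :
    NormedSpace.exp (Complex.I • S) = cfc Real.cos S + Complex.I • cfc Real.sin S := by
  have hSn : IsStarNormal S := hS.isStarNormal
  have hIS : IsStarNormal (Complex.I • S) := by
    constructor
    rw [star_smul, hS.star_eq, star_def, conj_I]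
    exact ((Commute.refl S).smul_left (-I)).smul_right I
  rw [← CFC.complex_exp_eq_normedSpace_exp hIS]
  rw [← cfc_comp_smul Complex.I Complex.exp S (Complex.continuous_exp.continuousOn) hSn]
  have h1 : (fun z : ℂ => Complex.exp (Complex.I • z)) =
      fun z : ℂ => Complex.cos z + Complex.sin z * Complex.I := by
    funext z
    rw [smul_eq_mul, mul_comm, Complex.exp_mul_I]
  rw [h1]
  have h2 : cfc (fun z : ℂ => Complex.cos z + Complex.sin z * Complex.I) S
      = cfc Complex.cos S + cfc (fun z => Complex.sin z * Complex.I) S :=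
    cfc_add S _ _ (Complex.continuous_cos.continuousOn)
      ((Complex.continuous_sin.mul continuous_const).continuousOn)
  rw [h2]
  have h3 : cfc (fun z : ℂ => Complex.sin z * Complex.I) S
      = Complex.I • cfc Complex.sin S := by
    rw [← cfc_smul Complex.I Complex.sin S (Complex.continuous_sin.continuousOn)]
    congr 1
    funext z
    rw [smul_eq_mul, mul_comm]
  rw [h3]
  have hcos : cfc Real.cos S = cfc Complex.cos S := by
    rw [cfc_real_eq_complex Real.cos hS]
    apply cfc_congr
    intro z hz
    have hre := hS.mem_spectrum_eq_re hz
    show ((Real.cos z.re : ℝ) : ℂ) = Complex.cos z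
    rw [Complex.ofReal_cos]
    exact congrArg Complex.cos hre.symm
  have hsin : cfc Real.sin S = cfc Complex.sin S := by
    rw [cfc_real_eq_complex Real.sin hS]
    apply cfc_congr
    intro z hz
    have hre := hS.mem_spectrum_eq_re hz
    show ((Real.sin z.re : ℝ) : ℂ) = Complex.sin z
    rw [Complex.ofReal_sin]
    exact congrArg Complex.sin hre.symm
  rw [hcos, hsin]

theorem cfc_one_sub_sq (T : H →L[ℂ] H) (hT : IsSelfAdjoint T) :
    cfc (fun x : ℝ => 1 - x ^ 2) T = 1 - T ^ 2 := by
  rw [cfc_sub (fun _ => (1:ℝ)) (fun x => x ^ 2) T, cfc_pow_id T 2]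
  rw [show (fun _ : ℝ => (1:ℝ)) = (1 : ℝ → ℝ) from rfl, cfc_one ℝ T]

theorem cfc_cos_arcsin (T : H →L[ℂ] H) (hT : IsSelfAdjoint T) :
    cfc Real.cos (cfc Real.arcsin T) = cfc Real.sqrt (1 - T ^ 2) := by
  rw [← cfc_comp Real.cos Real.arcsin T hT
    (Real.continuous_cos.continuousOn) (Real.continuous_arcsin.continuousOn)]
  have h1 : cfc (Real.cos ∘ Real.arcsin) T = cfc (fun x : ℝ => Real.sqrt (1 - x ^ 2)) T := by
    apply cfc_congr
    intro x _
    exact Real.cos_arcsin x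
  rw [h1, ← cfc_one_sub_sq T hT]
  rw [← cfc_comp Real.sqrt (fun x : ℝ => 1 - x ^ 2) T hT
    (Real.continuous_sqrt.continuousOn) (by fun_prop)]
  rfl

theorem cfc_sin_arcsin (T : H →L[ℂ] H) (hT : IsSelfAdjoint T)
    (hspec : spectrum ℝ T ⊆ Set.Icc 0 1) :
    cfc Real.sin (cfc Real.arcsin T) = T := by
  rw [← cfc_comp Real.sin Real.arcsin T hT
    (Real.continuous_sin.continuousOn) (Real.continuous_arcsin.continuousOn)]
  have h1 : cfc (Real.sin ∘ Real.arcsin) T = cfc (id : ℝ → ℝ) T := by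
    apply cfc_congr
    intro x hx
    obtain ⟨h0, h1⟩ := Set.mem_Icc.mp (hspec hx)
    exact Real.sin_arcsin (by linarith) h1
  rw [h1, cfc_id ℝ T]

theorem unitary_sub_smul_one_isUnit {U : H →L[ℂ] H} (hU : U ∈ unitary (H →L[ℂ] H)) {z : ℂ}
    (hz : ‖z‖ ≠ 1) : IsUnit (U - z • 1) := by
  by_contra hcon
  have h1 : U - z • 1 = -(z • 1 - U) := (neg_sub _ _).symm
  rw [h1, IsUnit.neg_iff] at hcon
  have h2 : z ∈ spectrum ℂ U := by
    rw [spectrum.mem_iff, Algebra.algebraMap_eq_smul_one]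
    exact hcon
  have h3 := spectrum.subset_circle_of_unitary hU h2
  rw [Metric.mem_sphere, dist_zero_right] at h3
  exact hz h3

theorem ring_core1 {R : Type*} [Ring R] [Algebra ℂ R] (z : ℂ) (U₀ U₁ P A : R)
    (hkey : (P + A) * U₁ = U₀ * (P - A)) :
    (U₀ + z • 1) * (P * (U₁ - z • 1)) - (U₀ - z • 1) * (P * (U₁ + z • 1))
      + (U₀ + z • 1) * (A * (U₁ + z • 1)) - (U₀ - z • 1) * (A * (U₁ - z • 1)) = 0 := by
  have h : (U₀ + z • 1) * (P * (U₁ - z • 1)) - (U₀ - z • 1) * (P * (U₁ + z • 1))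
      + (U₀ + z • 1) * (A * (U₁ + z • 1)) - (U₀ - z • 1) * (A * (U₁ - z • 1))
      = (2 * z) • ((P + A) * U₁ - U₀ * (P - A)) := by
    simp only [mul_add, add_mul, mul_sub, sub_mul, smul_mul_assoc, mul_smul_comm, one_mul,
      mul_one, smul_smul]
    module
  rw [h, hkey]
  simp

theorem ring_core2 {R : Type*} [Ring R] [Algebra ℂ R] (z : ℂ) (U₀ U₁ P A : R)
    (hkey : U₁ * (P + A) = (P - A) * U₀) :
    (U₁ - z • 1) * (P * (U₀ + z • 1)) - (U₁ + z • 1) * (P * (U₀ - z • 1))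
      + (U₁ + z • 1) * (A * (U₀ + z • 1)) - (U₁ - z • 1) * (A * (U₀ - z • 1)) = 0 := by
  have h : (U₁ - z • 1) * (P * (U₀ + z • 1)) - (U₁ + z • 1) * (P * (U₀ - z • 1))
      + (U₁ + z • 1) * (A * (U₀ + z • 1)) - (U₁ - z • 1) * (A * (U₀ - z • 1))
      = (2 * z) • (U₁ * (P + A) - (P - A) * U₀) := by
    simp only [mul_add, add_mul, mul_sub, sub_mul, smul_mul_assoc, mul_smul_comm, one_mul,
      mul_one, smul_smul]
    module
  rw [h, hkey]
  simp

theorem core_identity1 {R : Type*} [Ring R] [Algebra ℂ R] (z : ℂ) (U₀ U₁ c A : R)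
    (hu0 : IsUnit (U₀ - z • 1)) (hu1 : IsUnit (U₁ - z • 1))
    (hkey : (Complex.I • c + A) * U₁ = U₀ * (Complex.I • c - A)) :
    ((U₀ + z • 1) * Ring.inverse (U₀ - z • 1)) * (Complex.I • c)
      - (Complex.I • c) * ((U₁ + z • 1) * Ring.inverse (U₁ - z • 1))
      + ((U₀ + z • 1) * Ring.inverse (U₀ - z • 1))
          * (A * ((U₁ + z • 1) * Ring.inverse (U₁ - z • 1))) = A := by
  set M₀ := (U₀ + z • 1) * Ring.inverse (U₀ - z • 1) with hM₀
  set M₁ := (U₁ + z • 1) * Ring.inverse (U₁ - z • 1) with hM₁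
  set P := Complex.I • c with hP
  have hc0 : (U₀ - z • 1) * (U₀ + z • 1) = (U₀ + z • 1) * (U₀ - z • 1) := by
    simp only [mul_add, add_mul, mul_sub, sub_mul, smul_mul_assoc, mul_smul_comm, mul_one,
      one_mul, smul_smul]
    module
  have h10 : (U₀ - z • 1) * M₀ = U₀ + z • 1 := by
    rw [hM₀, ← mul_assoc, hc0, mul_assoc, Ring.mul_inverse_cancel _ hu0, mul_one]
  have h21 : M₁ * (U₁ - z • 1) = U₁ + z • 1 := by
    rw [hM₁, mul_assoc, Ring.inverse_mul_cancel _ hu1, mul_one]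
  have hL0 : ∀ x, (U₀ - z • 1) * (M₀ * x) = (U₀ + z • 1) * x := fun x => by
    rw [← mul_assoc, h10]
  refine hu0.mul_left_cancel (hu1.mul_right_cancel ?_)
  have hD : (U₀ - z • 1) * (M₀ * P - P * M₁ + M₀ * (A * M₁))
      = (U₀ + z • 1) * P - (U₀ - z • 1) * (P * M₁) + (U₀ + z • 1) * (A * M₁) := by
    rw [mul_add, mul_sub, hL0 P, hL0 (A * M₁)]
  rw [hD, add_mul, sub_mul]
  simp only [mul_assoc]
  simp only [h21]
  exact sub_eq_zero.mp (ring_core1 z U₀ U₁ P A (by rw [hP]; exact hkey))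

theorem core_identity2 {R : Type*} [Ring R] [Algebra ℂ R] (z : ℂ) (U₀ U₁ c A : R)
    (hu0 : IsUnit (U₀ - z • 1)) (hu1 : IsUnit (U₁ - z • 1))
    (hkey : U₁ * (Complex.I • c + A) = (Complex.I • c - A) * U₀) :
    (Complex.I • c) * ((U₀ + z • 1) * Ring.inverse (U₀ - z • 1))
      - ((U₁ + z • 1) * Ring.inverse (U₁ - z • 1)) * (Complex.I • c)
      + ((U₁ + z • 1) * Ring.inverse (U₁ - z • 1))
          * (A * ((U₀ + z • 1) * Ring.inverse (U₀ - z • 1))) = A := by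
  set M₀ := (U₀ + z • 1) * Ring.inverse (U₀ - z • 1) with hM₀
  set M₁ := (U₁ + z • 1) * Ring.inverse (U₁ - z • 1) with hM₁
  set P := Complex.I • c with hP
  have hc1 : (U₁ - z • 1) * (U₁ + z • 1) = (U₁ + z • 1) * (U₁ - z • 1) := by
    simp only [mul_add, add_mul, mul_sub, sub_mul, smul_mul_assoc, mul_smul_comm, mul_one,
      one_mul, smul_smul]
    module
  have h11 : (U₁ - z • 1) * M₁ = U₁ + z • 1 := by
    rw [hM₁, ← mul_assoc, hc1, mul_assoc, Ring.mul_inverse_cancel _ hu1, mul_one]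
  have h20 : M₀ * (U₀ - z • 1) = U₀ + z • 1 := by
    rw [hM₀, mul_assoc, Ring.inverse_mul_cancel _ hu0, mul_one]
  have hL1 : ∀ x, (U₁ - z • 1) * (M₁ * x) = (U₁ + z • 1) * x := fun x => by
    rw [← mul_assoc, h11]
  refine hu1.mul_left_cancel (hu0.mul_right_cancel ?_)
  have hD : (U₁ - z • 1) * (P * M₀ - M₁ * P + M₁ * (A * M₀))
      = (U₁ - z • 1) * (P * M₀) - (U₁ + z • 1) * P + (U₁ + z • 1) * (A * M₀) := by
    rw [mul_add, mul_sub, hL1 P, hL1 (A * M₀)]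
  rw [hD, add_mul, sub_mul]
  simp only [mul_assoc]
  simp only [h20]
  exact sub_eq_zero.mp (ring_core2 z U₀ U₁ P A (by rw [hP]; exact hkey))

theorem selfadj_pair_unit {R : Type*} [Ring R] [Algebra ℂ R] (c a : R)
    (hc : c * a = a * c) (h : c * c + a * a = 1) :
    (c - Complex.I • a) * (c + Complex.I • a) = 1
      ∧ (c + Complex.I • a) * (c - Complex.I • a) = 1 := by
  have e1 : (c - Complex.I • a) * (c + Complex.I • a)
      = (c * c + a * a) + Complex.I • (c * a) - Complex.I • (a * c) := by
    simp only [mul_add, sub_mul, smul_mul_assoc, mul_smul_comm, smul_smul, Complex.I_mul_I,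
      neg_one_smul]
    match_scalars <;> simp [Complex.I_sq]
  have e2 : (c + Complex.I • a) * (c - Complex.I • a)
      = (c * c + a * a) + Complex.I • (a * c) - Complex.I • (c * a) := by
    simp only [mul_sub, add_mul, smul_mul_assoc, mul_smul_comm, smul_smul, Complex.I_mul_I,
      neg_one_smul]
    match_scalars <;> simp [Complex.I_sq]
  rw [e1, e2, hc, h]
  simp

theorem spec_Icc01 (T : H →L[ℂ] H) (hT : 0 ≤ T) (hn : ‖T‖ ≤ 1) :
    spectrum ℝ T ⊆ Set.Icc 0 1 := by
  intro x hx
  refine Set.mem_Icc.mpr ⟨spectrum_nonneg_of_nonneg hT hx, ?_⟩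
  rcases subsingleton_or_nontrivial H with hH | hH
  · exact absurd (isUnit_of_subsingleton _) (spectrum.mem_iff.mp hx)
  · have : Nontrivial (H →L[ℂ] H) := ⟨1, 0, fun hc => by
      obtain ⟨y, hy⟩ := exists_ne (0 : H)
      exact hy (by simpa using DFunLike.congr_fun hc y)⟩
    have h1 := spectrum.norm_le_norm_of_mem hx
    rw [Real.norm_eq_abs] at h1
    linarith [le_abs_self x, h1.trans hn]

theorem opA_nonneg (G : H →L[ℂ] K) : (0 : H →L[ℂ] H) ≤ opA G := by
  rw [ContinuousLinearMap.nonneg_iff_isPositive]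
  have h1 : (ContinuousLinearMap.adjoint G).comp ((1 : K →L[ℂ] K).comp G) = opA G := by
    rw [ContinuousLinearMap.one_def, ContinuousLinearMap.id_comp]; rfl
  have := (ContinuousLinearMap.isPositive_one (E := K)).adjoint_conj G
  rwa [h1] at this

theorem opB_nonneg (G : H →L[ℂ] K) : (0 : K →L[ℂ] K) ≤ opB G := by
  have h := opA_nonneg (ContinuousLinearMap.adjoint G)
  rw [opA, ContinuousLinearMap.adjoint_adjoint] at h
  exact h

theorem opA_sa (G : H →L[ℂ] K) : IsSelfAdjoint (opA G) := by
  rw [IsSelfAdjoint, opA, ContinuousLinearMap.star_eq_adjoint, ContinuousLinearMap.adjoint_comp,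
    ContinuousLinearMap.adjoint_adjoint]

theorem opB_sa (G : H →L[ℂ] K) : IsSelfAdjoint (opB G) := by
  have h := opA_sa (ContinuousLinearMap.adjoint G)
  rwa [opA, ContinuousLinearMap.adjoint_adjoint] at h

theorem opA_norm (G : H →L[ℂ] K) (hG : ‖G‖ ≤ 1) : ‖opA G‖ ≤ 1 := by
  rw [opA, ContinuousLinearMap.norm_adjoint_comp_self]
  nlinarith [norm_nonneg G]

theorem opB_norm (G : H →L[ℂ] K) (hG : ‖G‖ ≤ 1) : ‖opB G‖ ≤ 1 := by
  have h := ContinuousLinearMap.norm_adjoint_comp_self (ContinuousLinearMap.adjoint G)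
  rw [ContinuousLinearMap.adjoint_adjoint] at h
  rw [opB, h]
  have h2 : ‖ContinuousLinearMap.adjoint G‖ = ‖G‖ :=
    LinearIsometryEquiv.norm_map ContinuousLinearMap.adjoint G
  rw [h2]
  nlinarith [norm_nonneg G]

theorem opA_spec (G : H →L[ℂ] K) (hG : ‖G‖ ≤ 1) : spectrum ℝ (opA G) ⊆ Set.Icc 0 1 :=
  spec_Icc01 _ (opA_nonneg G) (opA_norm G hG)

theorem opB_spec (G : H →L[ℂ] K) (hG : ‖G‖ ≤ 1) : spectrum ℝ (opB G) ⊆ Set.Icc 0 1 :=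
  spec_Icc01 _ (opB_nonneg G) (opB_norm G hG)

theorem one_sub_sq_sa (T : H →L[ℂ] H) (hT : IsSelfAdjoint T) :
    IsSelfAdjoint ((1 : H →L[ℂ] H) - T ^ 2) :=
  (IsSelfAdjoint.one _).sub (hT.pow 2)

theorem one_sub_sq_spec (T : H →L[ℂ] H) (hT : IsSelfAdjoint T)
    (hspec : spectrum ℝ T ⊆ Set.Icc 0 1) :
    spectrum ℝ ((1 : H →L[ℂ] H) - T ^ 2) ⊆ Set.Icc 0 1 := by
  rw [← cfc_one_sub_sq T hT, cfc_map_spectrum (fun x : ℝ => 1 - x ^ 2) T hT]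
  rintro - ⟨x, hx, rfl⟩
  obtain ⟨h0, h1⟩ := Set.mem_Icc.mp (hspec hx)
  exact Set.mem_Icc.mpr ⟨by simp only; nlinarith, by simp only; nlinarith⟩

theorem cfc_sqrt_mul_self (T : H →L[ℂ] H) (hsa : IsSelfAdjoint T)
    (hspec : spectrum ℝ T ⊆ Set.Ici 0) :
    cfc Real.sqrt T * cfc Real.sqrt T = T := by
  rw [← cfc_mul Real.sqrt Real.sqrt T
    (Real.continuous_sqrt.continuousOn) (Real.continuous_sqrt.continuousOn)]
  have h1 : cfc (fun x => Real.sqrt x * Real.sqrt x) T = cfc (id : ℝ → ℝ) T := by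
    apply cfc_congr
    intro x hx
    exact Real.mul_self_sqrt (hspec hx)
  rw [h1, cfc_id ℝ T]

open ContinuousLinearMap in
theorem sandw_mul (G : H →L[ℂ] K) (X Y : H →L[ℂ] H) :
    sandw G X * sandw G Y = sandw G (X * (opA G * Y)) := by
  ext x; rfl

open ContinuousLinearMap in
theorem sandw_sub (G : H →L[ℂ] K) (X Y : H →L[ℂ] H) :
    sandw G (X - Y) = sandw G X - sandw G Y := by
  ext x; simp [sandw]

open ContinuousLinearMap in
theorem sandw_add (G : H →L[ℂ] K) (X Y : H →L[ℂ] H) :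
    sandw G (X + Y) = sandw G X + sandw G Y := by
  ext x; simp [sandw]

open ContinuousLinearMap in
theorem sandw_smul (G : H →L[ℂ] K) (c : ℂ) (X : H →L[ℂ] H) :
    sandw G (c • X) = c • sandw G X := by
  ext x; simp [sandw]

open ContinuousLinearMap in
theorem sandw_zero (G : H →L[ℂ] K) : sandw G (0 : H →L[ℂ] H) = 0 := by
  ext x; simp [sandw]

open ContinuousLinearMap in
theorem opB_sq (G : H →L[ℂ] K) : opB G ^ 2 = sandw G (opA G) := by
  rw [pow_two]; ext x; rfl

open ContinuousLinearMap in
theorem G_comp_one_sub_sq (G : H →L[ℂ] K) :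
    G.comp (1 - opA G ^ 2) = ((1 : K →L[ℂ] K) - opB G ^ 2).comp G := by
  ext x; simp [opA, opB, pow_two]

open ContinuousLinearMap in
theorem G_intertwine_sqrt (G : H →L[ℂ] K) :
    G.comp (cfc Real.sqrt (1 - opA G ^ 2)) = (alphaOp G).comp G := by
  rw [alphaOp_eq]
  exact intertwine_cfc G _ _ (one_sub_sq_sa _ (opA_sa G)) (one_sub_sq_sa _ (opB_sa G))
    (G_comp_one_sub_sq G) Real.sqrt Real.continuous_sqrt

open ContinuousLinearMap in
theorem Gs_intertwine_sqrt (G : H →L[ℂ] K) :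
    (adjoint G).comp (alphaOp G) = (cfc Real.sqrt (1 - opA G ^ 2)).comp (adjoint G) := by
  have h := congrArg ContinuousLinearMap.adjoint (G_intertwine_sqrt G)
  rw [ContinuousLinearMap.adjoint_comp, ContinuousLinearMap.adjoint_comp] at h
  have hsa1 : ContinuousLinearMap.adjoint (cfc Real.sqrt (1 - opA G ^ 2))
      = cfc Real.sqrt (1 - opA G ^ 2) := by
    rw [← ContinuousLinearMap.star_eq_adjoint]
    exact (cfc_predicate Real.sqrt (1 - opA G ^ 2)).star_eq
  have hsa2 : ContinuousLinearMap.adjoint (alphaOp G) = alphaOp G := by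
    rw [alphaOp_eq, ← ContinuousLinearMap.star_eq_adjoint]
    exact (cfc_predicate Real.sqrt ((1 : K →L[ℂ] K) - opB G ^ 2)).star_eq
  rw [hsa1, hsa2] at h
  exact h.symm

open ContinuousLinearMap in
theorem alpha_mul_sandw (G : H →L[ℂ] K) (X : H →L[ℂ] H) :
    alphaOp G * sandw G X = sandw G (cfc Real.sqrt (1 - opA G ^ 2) * X) := by
  rw [ContinuousLinearMap.mul_def, sandw, sandw, ContinuousLinearMap.mul_def,
    ← ContinuousLinearMap.comp_assoc, ← ContinuousLinearMap.comp_assoc,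
    ← G_intertwine_sqrt G]
  ext x; rfl

open ContinuousLinearMap in
theorem sandw_mul_alpha (G : H →L[ℂ] K) (X : H →L[ℂ] H) :
    sandw G X * alphaOp G = sandw G (X * cfc Real.sqrt (1 - opA G ^ 2)) := by
  rw [ContinuousLinearMap.mul_def, sandw, sandw, ContinuousLinearMap.mul_def,
    ContinuousLinearMap.comp_assoc, Gs_intertwine_sqrt G]
  ext x; rfl

open ContinuousLinearMap in
theorem alpha_mul_alpha (G : H →L[ℂ] K) (hG : ‖G‖ ≤ 1) :
    alphaOp G * alphaOp G = 1 - sandw G (opA G) := by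
  rw [alphaOp_eq, cfc_sqrt_mul_self _ (one_sub_sq_sa _ (opB_sa G))
    (fun x hx => (one_sub_sq_spec _ (opB_sa G) (opB_spec G hG) hx).1), opB_sq]

theorem expand_mul1 {R : Type*} [Ring R] (a p q : R) :
    (a + p) * (a - q) = a * a + p * a - a * q - p * q := by
  rw [mul_sub, add_mul, add_mul]; abel

theorem expand_mul2 {R : Type*} [Ring R] (a p q : R) :
    (a - q) * (a + p) = a * a - q * a + a * p - q * p := by
  rw [sub_mul, mul_add, mul_add]; abel

theorem U1_eq (U₀ : H →L[ℂ] H) (G : H →L[ℂ] K) :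
    U1 U₀ G = NormedSpace.exp ((Complex.I / 2) • Theta G) * U₀ *
      NormedSpace.exp ((Complex.I / 2) • Theta G) := rfl

/-- De Branges' identities `(α + ψ₀(z))(α − ψ₁(z)) = I = (α − ψ₁(z))(α + ψ₀(z))`. -/
theorem deBranges_identities (U₀ : H →L[ℂ] H) (hU₀ : U₀ ∈ unitary (H →L[ℂ] H))
    (G : H →L[ℂ] K) (hG : ‖G‖ ≤ 1) :
    U1 U₀ G ∈ unitary (H →L[ℂ] H) ∧
    ∀ z : ℂ, ‖z‖ ≠ 1 →
      IsUnit (U₀ - z • 1) ∧ IsUnit (U1 U₀ G - z • 1) ∧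
      (alphaOp G + psi G U₀ z) * (alphaOp G - psi G (U1 U₀ G) z) = 1 ∧
      (alphaOp G - psi G (U1 U₀ G) z) * (alphaOp G + psi G U₀ z) = 1 := by
  have hA_sa := opA_sa G
  have hA_spec := opA_spec G hG
  set S := cfc Real.arcsin (opA G) with hS_def
  have hS_sa : IsSelfAdjoint S := cfc_predicate Real.arcsin (opA G)
  have hsmul : (Complex.I / 2) • Theta G = Complex.I • S := by
    rw [Theta_eq, smul_comm, ← algebraMap_smul ℂ (2:ℝ) ((Complex.I/2) • S), smul_smul]
    norm_num
    congr 1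
    ring
  set cH := cfc Real.sqrt (1 - opA G ^ 2) with hcH_def
  have hcH_sa : IsSelfAdjoint cH := cfc_predicate Real.sqrt (1 - opA G ^ 2)
  have hexp : NormedSpace.exp ((Complex.I / 2) • Theta G) = cH + Complex.I • opA G := by
    rw [hsmul, exp_I_smul_selfAdjoint S hS_sa, hS_def, cfc_cos_arcsin (opA G) hA_sa,
      cfc_sin_arcsin (opA G) hA_sa hA_spec]
  have hcomm : cH * opA G = opA G * cH := by
    have hco : (opA G).comp (1 - opA G ^ 2) = (1 - opA G ^ 2).comp (opA G) := by
      rw [← ContinuousLinearMap.mul_def, ← ContinuousLinearMap.mul_def]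
      noncomm_ring
    have h := intertwine_cfc (opA G) (1 - opA G ^ 2) (1 - opA G ^ 2)
      (one_sub_sq_sa _ hA_sa) (one_sub_sq_sa _ hA_sa) hco Real.sqrt Real.continuous_sqrt
    rw [← ContinuousLinearMap.mul_def, ← ContinuousLinearMap.mul_def] at h
    exact h.symm
  have hcH2 : cH * cH + opA G * opA G = 1 := by
    rw [hcH_def, cfc_sqrt_mul_self _ (one_sub_sq_sa _ hA_sa)
      (fun x hx => (one_sub_sq_spec _ hA_sa hA_spec hx).1), ← pow_two]
    abel
  obtain ⟨hEsE, hEEs⟩ := selfadj_pair_unit cH (opA G) hcomm hcH2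
  have hstarE : star (cH + Complex.I • opA G) = cH - Complex.I • opA G := by
    rw [star_add, star_smul, Complex.star_def, Complex.conj_I, hcH_sa.star_eq, hA_sa.star_eq,
      neg_smul, ← sub_eq_add_neg]
  have hEmem : NormedSpace.exp ((Complex.I / 2) • Theta G) ∈ unitary (H →L[ℂ] H) := by
    rw [hexp]
    exact Unitary.mem_iff.mpr ⟨by rw [hstarE]; exact hEsE, by rw [hstarE]; exact hEEs⟩
  have hU1mem : U1 U₀ G ∈ unitary (H →L[ℂ] H) := by
    rw [U1_eq]
    exact mul_mem (mul_mem hEmem hU₀) hEmem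
  refine ⟨hU1mem, fun z hz => ?_⟩
  have hu0 := unitary_sub_smul_one_isUnit hU₀ hz
  have hu1 := unitary_sub_smul_one_isUnit hU1mem hz
  have hU1eq : U1 U₀ G = (cH + Complex.I • opA G) * U₀ * (cH + Complex.I • opA G) := by
    rw [U1_eq, hexp]
  have hPA1 : Complex.I • cH + opA G = Complex.I • (cH - Complex.I • opA G) := by
    rw [smul_sub, smul_smul, Complex.I_mul_I, neg_one_smul, sub_neg_eq_add]
  have hPA2 : Complex.I • cH - opA G = Complex.I • (cH + Complex.I • opA G) := by
    rw [smul_add, smul_smul, Complex.I_mul_I, neg_one_smul, ← sub_eq_add_neg]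
  have hkey1 : (Complex.I • cH + opA G) * U1 U₀ G = U₀ * (Complex.I • cH - opA G) := by
    rw [hPA1, hPA2, hU1eq, smul_mul_assoc, mul_smul_comm]
    congr 1
    simp only [← mul_assoc]
    rw [hEsE, one_mul]
  have hkey2 : U1 U₀ G * (Complex.I • cH + opA G) = (Complex.I • cH - opA G) * U₀ := by
    rw [hPA1, hPA2, hU1eq, mul_smul_comm, smul_mul_assoc]
    congr 1
    simp only [mul_assoc]
    rw [hEEs, mul_one]
  have hid1 := core_identity1 z U₀ (U1 U₀ G) cH (opA G) hu0 hu1 hkey1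
  have hid2 := core_identity2 z U₀ (U1 U₀ G) cH (opA G) hu0 hu1 hkey2
  refine ⟨hu0, hu1, ?_, ?_⟩
  · rw [psi_eq, psi_eq]
    set M₀ := (U₀ + z • 1) * Ring.inverse (U₀ - z • 1) with hM₀
    set M₁ := (U1 U₀ G + z • 1) * Ring.inverse (U1 U₀ G - z • 1) with hM₁
    have expand : (alphaOp G + Complex.I • sandw G M₀) * (alphaOp G - Complex.I • sandw G M₁)
        = alphaOp G * alphaOp G + (Complex.I • sandw G M₀) * alphaOp G
          - alphaOp G * (Complex.I • sandw G M₁)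
          - (Complex.I • sandw G M₀) * (Complex.I • sandw G M₁) :=
      expand_mul1 _ _ _
    have ht1 : (Complex.I • sandw G M₀) * alphaOp G = sandw G (M₀ * (Complex.I • cH)) := by
      rw [smul_mul_assoc, sandw_mul_alpha, ← sandw_smul, mul_smul_comm]
    have ht2 : alphaOp G * (Complex.I • sandw G M₁) = sandw G ((Complex.I • cH) * M₁) := by
      rw [mul_smul_comm, alpha_mul_sandw, ← sandw_smul, smul_mul_assoc]
    have ht3 : (Complex.I • sandw G M₀) * (Complex.I • sandw G M₁)
        = -(sandw G (M₀ * (opA G * M₁))) := by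
      rw [smul_mul_assoc, mul_smul_comm, smul_smul, Complex.I_mul_I, neg_one_smul, sandw_mul]
    rw [expand, alpha_mul_alpha G hG, ht1, ht2, ht3, sub_neg_eq_add]
    have hzero : sandw G (M₀ * (Complex.I • cH)) - sandw G ((Complex.I • cH) * M₁)
        + sandw G (M₀ * (opA G * M₁)) - sandw G (opA G) = 0 := by
      rw [← sandw_sub, ← sandw_add, ← sandw_sub,
        show M₀ * (Complex.I • cH) - Complex.I • cH * M₁ + M₀ * (opA G * M₁) - opA G = 0 from
          sub_eq_zero.mpr hid1]
      exact sandw_zero G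
    have hre : 1 - sandw G (opA G) + sandw G (M₀ * (Complex.I • cH))
          - sandw G (Complex.I • cH * M₁) + sandw G (M₀ * (opA G * M₁))
        = 1 + (sandw G (M₀ * (Complex.I • cH)) - sandw G (Complex.I • cH * M₁)
          + sandw G (M₀ * (opA G * M₁)) - sandw G (opA G)) := by
      abel
    rw [hre, hzero, add_zero]
  · rw [psi_eq, psi_eq]
    set M₀ := (U₀ + z • 1) * Ring.inverse (U₀ - z • 1) with hM₀
    set M₁ := (U1 U₀ G + z • 1) * Ring.inverse (U1 U₀ G - z • 1) with hM₁
    have expand : (alphaOp G - Complex.I • sandw G M₁) * (alphaOp G + Complex.I • sandw G M₀)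
        = alphaOp G * alphaOp G - (Complex.I • sandw G M₁) * alphaOp G
          + alphaOp G * (Complex.I • sandw G M₀)
          - (Complex.I • sandw G M₁) * (Complex.I • sandw G M₀) :=
      expand_mul2 _ _ _
    have ht1 : (Complex.I • sandw G M₁) * alphaOp G = sandw G (M₁ * (Complex.I • cH)) := by
      rw [smul_mul_assoc, sandw_mul_alpha, ← sandw_smul, mul_smul_comm]
    have ht2 : alphaOp G * (Complex.I • sandw G M₀) = sandw G ((Complex.I • cH) * M₀) := by
      rw [mul_smul_comm, alpha_mul_sandw, ← sandw_smul, smul_mul_assoc]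
    have ht3 : (Complex.I • sandw G M₁) * (Complex.I • sandw G M₀)
        = -(sandw G (M₁ * (opA G * M₀))) := by
      rw [smul_mul_assoc, mul_smul_comm, smul_smul, Complex.I_mul_I, neg_one_smul, sandw_mul]
    rw [expand, alpha_mul_alpha G hG, ht1, ht2, ht3, sub_neg_eq_add]
    have hzero : sandw G ((Complex.I • cH) * M₀) - sandw G (M₁ * (Complex.I • cH))
        + sandw G (M₁ * (opA G * M₀)) - sandw G (opA G) = 0 := by
      rw [← sandw_sub, ← sandw_add, ← sandw_sub,
        show (Complex.I • cH) * M₀ - M₁ * (Complex.I • cH) + M₁ * (opA G * M₀) - opA G = 0 from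
          sub_eq_zero.mpr hid2]
      exact sandw_zero G
    have hre : 1 - sandw G (opA G) - sandw G (M₁ * (Complex.I • cH))
          + sandw G (Complex.I • cH * M₀) + sandw G (M₁ * (opA G * M₀))
        = 1 + (sandw G ((Complex.I • cH) * M₀) - sandw G (M₁ * (Complex.I • cH))
          + sandw G (M₁ * (opA G * M₀)) - sandw G (opA G)) := by
      abel
    rw [hre, hzero, add_zero]
end
end

section
/- Let K be a complex Hilbert space, let α be a bounded self-adjoint operator on K, and let p₁, p₂, q₁, q₂ be bounded operators on K satisfying (α + pᵢ)(−α + qᵢ) = −I and (−α + qᵢ)(α + pᵢ) = −I for i = 1, 2. Then p₁ − p₂* = (α + p₂)* (q₁ − q₂*) (α + p₁). -/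
noncomputable section

variable {K : Type*} [NormedAddCommGroup K] [InnerProductSpace ℂ K] [CompleteSpace K]

/-- The algebraic identity `p₁ − p₂* = (α + p₂)*(q₁ − q₂*)(α + p₁)` for bounded operators
satisfying `(α + pᵢ)(−α + qᵢ) = (−α + qᵢ)(α + pᵢ) = −I`. -/
theorem algebraic_identity (α p₁ p₂ q₁ q₂ : K →L[ℂ] K) (hα : IsSelfAdjoint α)
    (h₁ : (α + p₁) * (-α + q₁) = -1) (h₁' : (-α + q₁) * (α + p₁) = -1)
    (h₂ : (α + p₂) * (-α + q₂) = -1) (h₂' : (-α + q₂) * (α + p₂) = -1) :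
    p₁ - star p₂ = star (α + p₂) * (q₁ - star q₂) * (α + p₁) := by
  have hA : star α = α := hα.star_eq
  have k1 : star (α + p₂) * star (-α + q₂) = -1 := by
    rw [← star_mul, h₂']; simp
  have key : q₁ - star q₂ = (-α + q₁) - star (-α + q₂) := by
    simp only [star_add, star_neg, hA]; abel
  rw [key, mul_sub, sub_mul, mul_assoc, h₁', k1]
  simp only [star_add, hA, mul_neg_one, neg_one_mul, neg_neg]
  abel
end
end

section
/- Let H and K be complex Hilbert spaces, let U₀ be a unitary operator on H, and let G : H → K be a bounded operator with ‖G‖ ≤ 1. Define Θ := 2·arcsin(G*G) via the continuous functional calculus, U₁ := exp(iΘ/2) ∘ U₀ ∘ exp(iΘ/2), α := (I − (GG*)²)^{1/2}, ψ_j(z) := i·G (U_j + z)(U_j − z)⁻¹ G* for j = 0,1 and |z| ≠ 1, and D₀(z) := α + ψ₀(z). Then for every z ∈ ℂ with |z| ≠ 1, one has ψ₀(z) − ψ₀(z)* = D₀(z)* (ψ₁(z) − ψ₁(z)*) D₀(z). -/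
noncomputable section

variable {H K : Type*} [NormedAddCommGroup H] [InnerProductSpace ℂ H] [CompleteSpace H]
  [NormedAddCommGroup K] [InnerProductSpace ℂ K] [CompleteSpace K]

/-- `D₀(z) = α + ψ₀(z)`. -/
def D0 (U₀ : H →L[ℂ] H) (G : H →L[ℂ] K) (z : ℂ) : K →L[ℂ] K :=
  alphaOp G + psi G U₀ z

section AuxiliaryLemmas

open ContinuousLinearMap Polynomial

lemma cfc_intertwine {A : H →L[ℂ] H} {B : K →L[ℂ] K}
    (hA : IsSelfAdjoint A) (hB : IsSelfAdjoint B)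
    (hA1 : spectrum ℝ A ⊆ Set.Icc (-1 : ℝ) 1) (hB1 : spectrum ℝ B ⊆ Set.Icc (-1 : ℝ) 1)
    (X : K →L[ℂ] H) (hX : A.comp X = X.comp B)
    {f : ℝ → ℝ} (hf : Continuous f) :
    (cfc f A).comp X = X.comp (cfc f B) := by
  have hpow : ∀ n : ℕ, (A ^ n).comp X = X.comp (B ^ n) := by
    intro n
    induction n with
    | zero => simp [ContinuousLinearMap.one_def]
    | succ n ih =>
      rw [pow_succ, pow_succ, ContinuousLinearMap.mul_def, ContinuousLinearMap.mul_def,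
        ContinuousLinearMap.comp_assoc, hX, ← ContinuousLinearMap.comp_assoc, ih,
        ContinuousLinearMap.comp_assoc]
  have haeval : ∀ p : ℝ[X], (aeval A p).comp X = X.comp (aeval B p) := by
    intro p
    induction p using Polynomial.induction_on' with
    | add p q hp hq =>
      rw [map_add, map_add, ContinuousLinearMap.add_comp, ContinuousLinearMap.comp_add, hp, hq]
    | monomial n c =>
      rw [aeval_monomial, aeval_monomial]
      ext v
      simp only [ContinuousLinearMap.comp_apply, ContinuousLinearMap.mul_apply,
        Algebra.algebraMap_eq_smul_one, ContinuousLinearMap.smul_apply,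
        ContinuousLinearMap.one_apply, map_smul_of_tower]
      rw [← ContinuousLinearMap.comp_apply, hpow n, ContinuousLinearMap.comp_apply]
  set s : Set ℝ := Set.Icc (-1 : ℝ) 1 with hs
  let ΦA : C(s, ℝ) → (H →L[ℂ] H) := fun g => cfcHom hA (g.comp (ContinuousMap.inclusion hA1))
  let ΦB : C(s, ℝ) → (K →L[ℂ] K) := fun g => cfcHom hB (g.comp (ContinuousMap.inclusion hB1))
  have hΦAc : Continuous ΦA :=
    (cfcHom_isClosedEmbedding hA).continuous.comp (ContinuousMap.continuous_precomp _)
  have hΦBc : Continuous ΦB :=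
    (cfcHom_isClosedEmbedding hB).continuous.comp (ContinuousMap.continuous_precomp _)
  have h1 : Continuous fun g : C(s, ℝ) => (ΦA g).comp X :=
    ((ContinuousLinearMap.compL ℂ K H H).flip X).continuous.comp hΦAc
  have h2 : Continuous fun g : C(s, ℝ) => X.comp (ΦB g) :=
    (ContinuousLinearMap.compL ℂ K K H X).continuous.comp hΦBc
  have hClosed : IsClosed {g : C(s, ℝ) | (ΦA g).comp X = X.comp (ΦB g)} := isClosed_eq h1 h2
  have hPolyA : ∀ p : ℝ[X], ΦA (p.toContinuousMapOn s) = aeval A p := by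
    intro p
    show cfcHom hA ((p.toContinuousMapOn s).comp (ContinuousMap.inclusion hA1)) = aeval A p
    have h1 : (p.toContinuousMapOn s).comp (ContinuousMap.inclusion hA1)
        = p.toContinuousMapOn (spectrum ℝ A) := by ext x; rfl
    rw [h1, ← cfc_polynomial p A hA, cfc_apply p.eval A hA]
    congr 1
  have hPolyB : ∀ p : ℝ[X], ΦB (p.toContinuousMapOn s) = aeval B p := by
    intro p
    show cfcHom hB ((p.toContinuousMapOn s).comp (ContinuousMap.inclusion hB1)) = aeval B p
    have h1 : (p.toContinuousMapOn s).comp (ContinuousMap.inclusion hB1)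
        = p.toContinuousMapOn (spectrum ℝ B) := by ext x; rfl
    rw [h1, ← cfc_polynomial p B hB, cfc_apply p.eval B hB]
    congr 1
  have hPoly : (polynomialFunctions s : Set C(s, ℝ)) ⊆ {g | (ΦA g).comp X = X.comp (ΦB g)} := by
    rw [polynomialFunctions_coe]
    rintro g ⟨p, rfl⟩
    show (ΦA (p.toContinuousMapOn s)).comp X = X.comp (ΦB (p.toContinuousMapOn s))
    rw [hPolyA, hPolyB]
    exact haeval p
  have hall : ∀ g : C(s, ℝ), (ΦA g).comp X = X.comp (ΦB g) := by
    intro g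
    have hg : g ∈ closure (polynomialFunctions s : Set C(s, ℝ)) := by
      have h := polynomialFunctions.topologicalClosure s
      have hmem : g ∈ (polynomialFunctions s).topologicalClosure := h ▸ Algebra.mem_top
      rw [← Subalgebra.topologicalClosure_coe]
      exact hmem
    exact hClosed.closure_subset_iff.mpr hPoly hg
  have key := hall ⟨fun x : s => f x, hf.comp continuous_subtype_val⟩
  have hgA : cfc f A = ΦA ⟨fun x : s => f x, hf.comp continuous_subtype_val⟩ := by
    rw [cfc_apply f A hA hf.continuousOn]
    congr 1
  have hgB : cfc f B = ΦB ⟨fun x : s => f x, hf.comp continuous_subtype_val⟩ := by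
    rw [cfc_apply f B hB hf.continuousOn]
    congr 1
  rw [hgA, hgB]
  exact key


lemma adj_comp_selfAdjoint (G : H →L[ℂ] K) :
    IsSelfAdjoint ((ContinuousLinearMap.adjoint G).comp G) := by
  rw [IsSelfAdjoint, ContinuousLinearMap.star_eq_adjoint, ContinuousLinearMap.adjoint_comp,
    ContinuousLinearMap.adjoint_adjoint]

lemma adj_comp_spectrum (G : H →L[ℂ] K) (hG : ‖G‖ ≤ 1) :
    spectrum ℝ ((ContinuousLinearMap.adjoint G).comp G) ⊆ Set.Icc (-1 : ℝ) 1 := by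
  intro x hx
  have h := spectrum.subset_closedBall_norm_mul ((ContinuousLinearMap.adjoint G).comp G) hx
  rw [Metric.mem_closedBall, dist_zero_right, Real.norm_eq_abs] at h
  have hn : ‖(ContinuousLinearMap.adjoint G).comp G‖ ≤ 1 := by
    rw [ContinuousLinearMap.norm_adjoint_comp_self]
    nlinarith [norm_nonneg G]
  have h1 : ‖(1 : H →L[ℂ] H)‖ ≤ 1 := by
    rw [ContinuousLinearMap.one_def]; exact ContinuousLinearMap.norm_id_le
  have habs : |x| ≤ 1 := by
    calc |x| ≤ ‖(ContinuousLinearMap.adjoint G).comp G‖ * ‖(1 : H →L[ℂ] H)‖ := h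
    _ ≤ 1 := by nlinarith [norm_nonneg ((ContinuousLinearMap.adjoint G).comp G),
        norm_nonneg (1 : H →L[ℂ] H)]
  exact abs_le.mp habs

lemma comp_adj_selfAdjoint (G : H →L[ℂ] K) :
    IsSelfAdjoint (G.comp (ContinuousLinearMap.adjoint G)) := by
  have := adj_comp_selfAdjoint (ContinuousLinearMap.adjoint G)
  rwa [ContinuousLinearMap.adjoint_adjoint] at this

lemma comp_adj_spectrum (G : H →L[ℂ] K) (hG : ‖G‖ ≤ 1) :
    spectrum ℝ (G.comp (ContinuousLinearMap.adjoint G)) ⊆ Set.Icc (-1 : ℝ) 1 := by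
  have := adj_comp_spectrum (ContinuousLinearMap.adjoint G)
    (by rw [show ‖ContinuousLinearMap.adjoint G‖ = ‖G‖ from ContinuousLinearMap.adjoint.norm_map G]; exact hG)
  rwa [ContinuousLinearMap.adjoint_adjoint] at this

lemma isUnit_res (U : H →L[ℂ] H) (hU : U ∈ unitary (H →L[ℂ] H)) {z : ℂ}
    (hz : ‖z‖ ≠ 1) : IsUnit (U - z • (1 : H →L[ℂ] H)) := by
  have h1 : z ∉ spectrum ℂ U := by
    intro h
    have := spectrum.subset_circle_of_unitary hU h
    rw [Metric.mem_sphere, dist_zero_right] at this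
    exact hz this
  rw [spectrum.notMem_iff] at h1
  have h2 : -(algebraMap ℂ (H →L[ℂ] H) z - U) = U - z • 1 := by
    rw [Algebra.algebraMap_eq_smul_one, neg_sub]
  exact h2 ▸ h1.neg

lemma res_facts (U : H →L[ℂ] H) (hU : U ∈ unitary (H →L[ℂ] H)) {z : ℂ}
    (hz : ‖z‖ ≠ 1) :
    (U - z • 1) * Ring.inverse (U - z • 1) = 1 ∧
    Ring.inverse (U - z • 1) * (U - z • 1) = 1 ∧
    star (U - z • 1) * star (Ring.inverse (U - z • 1)) = 1 ∧
    star (Ring.inverse (U - z • 1)) * star (U - z • 1) = 1 ∧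
    Ring.inverse (U - z • 1) * star (U - z • 1)
      = star (U - z • 1) * Ring.inverse (U - z • 1) ∧
    Ring.inverse (U - z • 1) * star (Ring.inverse (U - z • 1))
      = star (Ring.inverse (U - z • 1)) * Ring.inverse (U - z • 1) := by
  have hu := isUnit_res U hU hz
  set V := U - z • (1 : H →L[ℂ] H) with hV
  set R := Ring.inverse V with hR
  have h1 : V * R = 1 := Ring.mul_inverse_cancel V hu
  have h2 : R * V = 1 := Ring.inverse_mul_cancel V hu
  have h3 : star V * star R = 1 := by rw [← star_mul, h2, star_one]
  have h4 : star R * star V = 1 := by rw [← star_mul, h1, star_one]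
  have hUc : U * star U = star U * U :=
    (Unitary.mem_iff.mp hU).2.trans (Unitary.mem_iff.mp hU).1.symm
  have hVW : V * star V = star V * V := by
    simp only [hV, star_sub, star_smul, star_one, sub_mul, mul_sub, smul_mul_assoc,
      mul_smul_comm, smul_smul, mul_one, one_mul]
    rw [hUc]
    module
  have h5 : R * star V = star V * R := by
    calc R * star V = R * star V * (V * R) := by rw [h1, mul_one]
    _ = R * (star V * V) * R := by simp only [mul_assoc]
    _ = R * (V * star V) * R := by rw [hVW]
    _ = (R * V) * (star V * R) := by simp only [mul_assoc]
    _ = star V * R := by rw [h2, one_mul]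
  have h6 : R * star R = star R * R := by
    calc R * star R = (star R * star V) * (R * star R) := by rw [h4, one_mul]
    _ = star R * ((star V * R) * star R) := by simp only [mul_assoc]
    _ = star R * ((R * star V) * star R) := by rw [h5]
    _ = star R * (R * (star V * star R)) := by simp only [mul_assoc]
    _ = star R * R := by rw [h3, mul_one]
  exact ⟨h1, h2, h3, h4, h5, h6⟩

lemma theta_selfAdjoint (G : H →L[ℂ] K) : IsSelfAdjoint (Theta G) := by
  have h : IsSelfAdjoint (cfc Real.arcsin ((ContinuousLinearMap.adjoint G).comp G)) :=
    cfc_predicate Real.arcsin _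
  rw [Theta, IsSelfAdjoint, star_smul, star_trivial, h.star_eq]

lemma exp_formula (G : H →L[ℂ] K) (hG : ‖G‖ ≤ 1) :
    NormedSpace.exp ((Complex.I / 2) • Theta G)
      = cfc (fun t : ℝ => Real.sqrt (1 - t ^ 2)) ((ContinuousLinearMap.adjoint G).comp G)
        + Complex.I • ((ContinuousLinearMap.adjoint G).comp G) := by
  set a := (ContinuousLinearMap.adjoint G).comp G with ha'
  have hsa : IsSelfAdjoint a := adj_comp_selfAdjoint G
  have hspec : spectrum ℝ a ⊆ Set.Icc (-1 : ℝ) 1 := adj_comp_spectrum G hG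
  have hIS : (Complex.I / 2) • Theta G = Complex.I • cfc Real.arcsin a := by
    rw [Theta, ← ha', ← algebraMap_smul ℂ (2 : ℝ) (cfc Real.arcsin a), smul_smul]
    norm_num
  have hS : Complex.I • cfc Real.arcsin a
      = cfc (fun x : ℂ => Complex.I * (Real.arcsin x.re : ℂ)) a := by
    rw [cfc_real_eq_complex Real.arcsin (a := a) hsa,
      cfc_const_mul Complex.I (fun x : ℂ => (Real.arcsin x.re : ℂ)) a
        ((Complex.continuous_ofReal.comp
          (Real.continuous_arcsin.comp Complex.continuous_re)).continuousOn)]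
  have hnorm : IsStarNormal (cfc (fun x : ℂ => Complex.I * (Real.arcsin x.re : ℂ)) a) :=
    cfc_predicate _ a
  rw [hIS, hS, ← CFC.complex_exp_eq_normedSpace_exp hnorm,
    ← cfc_comp' Complex.exp (fun x : ℂ => Complex.I * (Real.arcsin x.re : ℂ)) a
      (Complex.continuous_exp.continuousOn)
      ((continuous_const.mul (Complex.continuous_ofReal.comp
        (Real.continuous_arcsin.comp Complex.continuous_re))).continuousOn)]
  have hcongr : (spectrum ℂ a).EqOn (fun x : ℂ => Complex.exp (Complex.I * (Real.arcsin x.re : ℂ)))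
      (fun x : ℂ => ((Real.sqrt (1 - x.re ^ 2) : ℝ) : ℂ) + Complex.I * x) := by
    intro x hx
    have hre : x = (x.re : ℂ) := hsa.mem_spectrum_eq_re hx
    have hmem : x.re ∈ spectrum ℝ a := by
      apply spectrum.of_algebraMap_mem ℂ
      show ((x.re : ℝ) : ℂ) ∈ spectrum ℂ a
      rwa [← hre]
    obtain ⟨hb1, hb2⟩ := hspec hmem
    show Complex.exp (Complex.I * (Real.arcsin x.re : ℂ))
        = ((Real.sqrt (1 - x.re ^ 2) : ℝ) : ℂ) + Complex.I * x
    rw [mul_comm, Complex.exp_mul_I, ← Complex.ofReal_cos, ← Complex.ofReal_sin,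
      Real.cos_arcsin, Real.sin_arcsin hb1 hb2]
    rw [mul_comm]
    nth_rewrite 2 [hre]
    rw [Complex.ofReal_re, ← hre]
  rw [cfc_congr hcongr]
  rw [cfc_add a (fun x : ℂ => ((Real.sqrt (1 - x.re ^ 2) : ℝ) : ℂ))
      (fun x : ℂ => Complex.I * x)
      ((show Continuous (fun x : ℂ => ((Real.sqrt (1 - x.re ^ 2) : ℝ) : ℂ)) from
        Complex.continuous_ofReal.comp (Real.continuous_sqrt.comp
        (continuous_const.sub (Complex.continuous_re.pow 2)))).continuousOn) (by fun_prop)]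
  congr 1
  · exact (cfc_real_eq_complex (fun t : ℝ => Real.sqrt (1 - t ^ 2)) (a := a) hsa).symm
  · rw [cfc_const_mul_id Complex.I a]

lemma star_sandwich (G : H →L[ℂ] K) (M : H →L[ℂ] H) :
    star ((G.comp M).comp (ContinuousLinearMap.adjoint G))
      = (G.comp (star M)).comp (ContinuousLinearMap.adjoint G) := by
  rw [ContinuousLinearMap.star_eq_adjoint, ContinuousLinearMap.adjoint_comp,
    ContinuousLinearMap.adjoint_comp, ContinuousLinearMap.adjoint_adjoint,
    ContinuousLinearMap.star_eq_adjoint, ContinuousLinearMap.comp_assoc]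

lemma psi_sub_star (G : H →L[ℂ] K) (U : H →L[ℂ] H) (hU : U ∈ unitary (H →L[ℂ] H)) {z : ℂ}
    (hz : ‖z‖ ≠ 1) :
    psi G U z - star (psi G U z)
      = (Complex.I * (2 - 2 * (z * (starRingEnd ℂ z)))) •
        ((G.comp (Ring.inverse (U - z • 1) * star (Ring.inverse (U - z • 1)))).comp
          (ContinuousLinearMap.adjoint G)) := by
  obtain ⟨h1, h2, h3, h4, h5, h6⟩ := res_facts U hU hz
  set w := starRingEnd ℂ z with hw
  set V := U - z • (1 : H →L[ℂ] H) with hV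
  set R := Ring.inverse V with hR
  set C := (U + z • (1 : H →L[ℂ] H)) * R with hC
  have hpsi : psi G U z = Complex.I • ((G.comp C).comp (ContinuousLinearMap.adjoint G)) := rfl
  have hstarpsi : star (psi G U z)
      = (-Complex.I) • ((G.comp (star C)).comp (ContinuousLinearMap.adjoint G)) := by
    rw [hpsi, star_smul, star_sandwich]
    congr 1
    simp [RCLike.star_def, Complex.conj_I]
  have hstarC : star C = star R * (star U + w • 1) := by
    rw [hC, star_mul]
    congr 1
    simp [star_add, star_smul, hw]
  have hM : star V * (U + z • 1) + (star U + w • 1) * V = (2 - 2 * (z * w)) • 1 := by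
    have hU1 : star U * U = 1 := (Unitary.mem_iff.mp hU).1
    simp only [hV, star_sub, star_smul, star_one, sub_mul, mul_sub, add_mul, mul_add,
      smul_mul_assoc, mul_smul_comm, smul_smul, mul_one, one_mul, RCLike.star_def, ← hw]
    rw [hU1]
    module
  have hCC : C + star C = (2 - 2 * (z * w)) • (R * star R) := by
    rw [hstarC]
    have e1 : C = star R * (star V * (U + z • 1)) * R := by
      have : star R * (star V * (U + z • 1)) * R = (star R * star V) * ((U + z • 1) * R) := by
        simp only [mul_assoc]
      rw [this, h4, one_mul, hC]
    have e2 : star R * (star U + w • 1) = star R * ((star U + w • 1) * V) * R := by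
      have : star R * ((star U + w • 1) * V) * R = star R * ((star U + w • 1) * (V * R)) := by
        simp only [mul_assoc]
      rw [this, h1, mul_one]
    rw [e1, e2]
    have e3 : star R * (star V * (U + z • 1)) * R + star R * ((star U + w • 1) * V) * R
        = star R * (star V * (U + z • 1) + (star U + w • 1) * V) * R := by
      noncomm_ring
    rw [e3, hM, mul_smul_comm, smul_mul_assoc, mul_one, ← h6]
  rw [hstarpsi, hpsi, neg_smul, sub_neg_eq_add, ← smul_add]
  rw [← ContinuousLinearMap.add_comp, ← ContinuousLinearMap.comp_add, hCC]
  rw [ContinuousLinearMap.comp_smul, ContinuousLinearMap.smul_comp, smul_smul]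


end AuxiliaryLemmas

set_option maxHeartbeats 1000000

/-- The identity `ψ₀(z) − ψ₀(z)* = D₀(z)* (ψ₁(z) − ψ₁(z)*) D₀(z)`. -/
theorem imaginary_part_intertwining (U₀ : H →L[ℂ] H)
    (hU₀ : U₀ ∈ unitary (H →L[ℂ] H)) (G : H →L[ℂ] K) (hG : ‖G‖ ≤ 1)
    (z : ℂ) (hz : ‖z‖ ≠ 1) :
    psi G U₀ z - star (psi G U₀ z) =
      star (D0 U₀ G z) * (psi G (U1 U₀ G) z - star (psi G (U1 U₀ G) z)) *
        D0 U₀ G z := by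
  set a := (ContinuousLinearMap.adjoint G).comp G with ha'
  set b := G.comp (ContinuousLinearMap.adjoint G) with hb'
  set E := NormedSpace.exp ((Complex.I / 2) • Theta G) with hE'
  have hsa : IsSelfAdjoint a := adj_comp_selfAdjoint G
  have hsb : IsSelfAdjoint b := comp_adj_selfAdjoint G
  have hspa := adj_comp_spectrum G hG
  have hspb := comp_adj_spectrum G hG
  set β := cfc (fun t : ℝ => Real.sqrt (1 - t ^ 2)) a with hβ'
  have hβsa : IsSelfAdjoint β := cfc_predicate _ a
  have hE : E = β + Complex.I • a := exp_formula G hG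
  have hEstar : star E = β - Complex.I • a := by
    rw [hE, star_add, star_smul, hβsa.star_eq, hsa.star_eq, RCLike.star_def, Complex.conj_I,
      neg_smul, ← sub_eq_add_neg]
  have hEunit : E ∈ unitary (H →L[ℂ] H) := by
    let +nondep : NormedAlgebra ℚ (H →L[ℂ] H) := .restrictScalars ℚ ℂ (H →L[ℂ] H)
    apply NormedSpace.exp_mem_unitary_of_mem_skewAdjoint
    rw [skewAdjoint.mem_iff, star_smul, (theta_selfAdjoint G).star_eq, RCLike.star_def,
      ← neg_smul]
    congr 1
    rw [map_div₀, Complex.conj_I, map_ofNat, neg_div]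
  have hEE : E * star E = 1 := (Unitary.mem_iff.mp hEunit).2
  have hU1mem : U1 U₀ G ∈ unitary (H →L[ℂ] H) := by
    rw [U1, ← hE']
    exact mul_mem (mul_mem hEunit hU₀) hEunit
  have hα : alphaOp G = cfc (fun t : ℝ => Real.sqrt (1 - t ^ 2)) b := by
    rw [alphaOp, ← hb']
    have h2 : (1 : K →L[ℂ] K) - b ^ 2 = cfc (fun t : ℝ => 1 - t ^ 2) b := by
      rw [cfc_sub (fun _ : ℝ => (1 : ℝ)) (fun t : ℝ => t ^ 2) b (by fun_prop) (by fun_prop),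
        cfc_const 1 b hsb, cfc_pow_id b 2 hsb, map_one]
    rw [h2, ← cfc_comp' Real.sqrt (fun t : ℝ => 1 - t ^ 2) b
      Real.continuous_sqrt.continuousOn (by fun_prop)]
  have hX : a.comp (ContinuousLinearMap.adjoint G) = (ContinuousLinearMap.adjoint G).comp b := by
    rw [ha', hb', ContinuousLinearMap.comp_assoc]
  have hint : β.comp (ContinuousLinearMap.adjoint G)
      = (ContinuousLinearMap.adjoint G).comp (alphaOp G) := by
    rw [hα, hβ']
    exact cfc_intertwine hsa hsb hspa hspb _ hX
      (Real.continuous_sqrt.comp (continuous_const.sub (continuous_pow 2)))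
  set V₀ := U₀ - z • (1 : H →L[ℂ] H) with hV₀
  set V₁ := U1 U₀ G - z • (1 : H →L[ℂ] H) with hV₁
  set R₀ := Ring.inverse V₀ with hR₀
  set R₁ := Ring.inverse V₁ with hR₁
  obtain ⟨h01, h02, h03, h04, h05, h06⟩ := res_facts U₀ hU₀ hz
  obtain ⟨h11, h12, h13, h14, h15, h16⟩ := res_facts (U1 U₀ G) hU1mem hz
  rw [← hV₀, ← hR₀] at h01 h02 h03 h04 h05 h06
  rw [← hV₁, ← hR₁] at h11 h12 h13 h14 h15 h16
  have hfac : β * V₀ + Complex.I • (a * (U₀ + z • 1)) = V₁ * star E := by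
    have hU1E : V₁ * star E = E * U₀ - z • star E := by
      rw [hV₁, U1, ← hE', sub_mul, smul_mul_assoc, one_mul,
        mul_assoc (E * U₀) E (star E), hEE, mul_one]
    rw [hU1E, hEstar, hE, hV₀]
    simp only [sub_mul, mul_sub, add_mul, mul_add, smul_mul_assoc, mul_smul_comm,
      smul_smul, smul_sub, smul_add, mul_one, one_mul]
    module
  have hN : β + Complex.I • (a * ((U₀ + z • 1) * R₀)) = (V₁ * star E) * R₀ := by
    have e1 : β = (β * V₀) * R₀ := by rw [mul_assoc, h01, mul_one]
    calc β + Complex.I • (a * ((U₀ + z • 1) * R₀))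
        = (β * V₀) * R₀ + Complex.I • ((a * (U₀ + z • 1)) * R₀) := by
          congr 1
    _ = (β * V₀ + Complex.I • (a * (U₀ + z • 1))) * R₀ := by rw [add_mul, smul_mul_assoc]
    _ = (V₁ * star E) * R₀ := by rw [hfac]
  have hKey : (ContinuousLinearMap.adjoint G).comp (D0 U₀ G z)
      = ((V₁ * star E) * R₀).comp (ContinuousLinearMap.adjoint G) := by
    rw [D0, ContinuousLinearMap.comp_add, ← hint]
    have hψ : (ContinuousLinearMap.adjoint G).comp (psi G U₀ z)
        = (Complex.I • (a * ((U₀ + z • 1) * R₀))).comp (ContinuousLinearMap.adjoint G) := by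
      rw [psi, ContinuousLinearMap.comp_smul, ContinuousLinearMap.smul_comp]
      congr 1
    rw [hψ, ← ContinuousLinearMap.add_comp, hN]
  have hKey' : (star (D0 U₀ G z)).comp G = G.comp (star R₀ * (E * star V₁)) := by
    have h := congrArg ContinuousLinearMap.adjoint hKey
    rw [ContinuousLinearMap.adjoint_comp, ContinuousLinearMap.adjoint_comp,
      ContinuousLinearMap.adjoint_adjoint, ← ContinuousLinearMap.star_eq_adjoint,
      ← ContinuousLinearMap.star_eq_adjoint, star_mul, star_mul, star_star] at h
    exact h
  rw [psi_sub_star G U₀ hU₀ hz, psi_sub_star G (U1 U₀ G) hU1mem hz, ← hV₀, ← hR₀,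
    ← hV₁, ← hR₁, mul_smul_comm, smul_mul_assoc]
  congr 1
  have hsplit : star (D0 U₀ G z) *
        ((G.comp (R₁ * star R₁)).comp (ContinuousLinearMap.adjoint G)) * (D0 U₀ G z)
      = ((star (D0 U₀ G z)).comp G).comp
          ((R₁ * star R₁).comp ((ContinuousLinearMap.adjoint G).comp (D0 U₀ G z))) := by
    simp only [ContinuousLinearMap.mul_def, ContinuousLinearMap.comp_assoc]
  rw [hsplit, hKey, hKey']
  symm
  have hmid : star V₁ * (R₁ * (star R₁ * (V₁ * (star E * R₀)))) = star E * R₀ := by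
    have hm : star V₁ * R₁ * star R₁ * V₁ = 1 := by
      calc star V₁ * R₁ * star R₁ * V₁ = (R₁ * star V₁) * star R₁ * V₁ := by rw [h15]
      _ = R₁ * ((star V₁ * star R₁) * V₁) := by simp only [mul_assoc]
      _ = R₁ * V₁ := by rw [h13, one_mul]
      _ = 1 := h12
    calc star V₁ * (R₁ * (star R₁ * (V₁ * (star E * R₀))))
        = (star V₁ * R₁ * star R₁ * V₁) * (star E * R₀) := by simp only [mul_assoc]
    _ = star E * R₀ := by rw [hm, one_mul]
  have hcore : (star R₀ * (E * star V₁)) * ((R₁ * star R₁) * ((V₁ * star E) * R₀))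
      = R₀ * star R₀ := by
    calc (star R₀ * (E * star V₁)) * ((R₁ * star R₁) * ((V₁ * star E) * R₀))
        = star R₀ * (E * (star V₁ * (R₁ * (star R₁ * (V₁ * (star E * R₀)))))) := by
          simp only [mul_assoc]
    _ = star R₀ * (E * (star E * R₀)) := by rw [hmid]
    _ = star R₀ * ((E * star E) * R₀) := by simp only [mul_assoc]
    _ = star R₀ * R₀ := by rw [hEE, one_mul]
    _ = R₀ * star R₀ := h06.symm
  calc (G.comp (star R₀ * (E * star V₁))).comp
        ((R₁ * star R₁).comp (((V₁ * star E) * R₀).comp (ContinuousLinearMap.adjoint G)))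
      = (G.comp ((star R₀ * (E * star V₁)) * ((R₁ * star R₁) * ((V₁ * star E) * R₀)))).comp
          (ContinuousLinearMap.adjoint G) := by
        simp only [ContinuousLinearMap.mul_def, ContinuousLinearMap.comp_assoc]
  _ = (G.comp (R₀ * star R₀)).comp (ContinuousLinearMap.adjoint G) := by rw [hcore]
end
end

section
/- Let H and K be complex Hilbert spaces, let A₀ be a bounded self-adjoint operator on H, let G : H → K be a bounded operator, and set A₁ := A₀ + G*G (also bounded and self-adjoint). Then for every z ∈ ℂ with Im z ≠ 0, the operators A₀ − z·I and A₁ − z·I are invertible and (I_K + G(A₀ − z)⁻¹G*)(I_K − G(A₁ − z)⁻¹G*) = I_K and (I_K − G(A₁ − z)⁻¹G*)(I_K + G(A₀ − z)⁻¹G*) = I_K. -/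
noncomputable section

variable {H K : Type*} [NormedAddCommGroup H] [InnerProductSpace ℂ H] [CompleteSpace H]
  [NormedAddCommGroup K] [InnerProductSpace ℂ K] [CompleteSpace K]

open ContinuousLinearMap in
lemma aux_isUnit_sub_smul_one {A : H →L[ℂ] H} (hA : IsSelfAdjoint A) {z : ℂ} (hz : z.im ≠ 0) :
    IsUnit (A - z • 1) := by
  have h1 : z ∉ spectrum ℂ A := fun h => hz (hA.im_eq_zero_of_mem_spectrum h)
  rw [spectrum.mem_iff, not_not] at h1
  have : A - z • 1 = -((algebraMap ℂ (H →L[ℂ] H)) z - A) := by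
    simp [Algebra.algebraMap_eq_smul_one]
  rw [this]
  exact h1.neg

open ContinuousLinearMap in
lemma aux_key_prod (G : H →L[ℂ] K) {u v : H →L[ℂ] H} (hu : IsUnit u) (hv : IsUnit v)
    (huv : (adjoint G).comp G = v - u) :
    ((G.comp (Ring.inverse u)).comp (adjoint G)) * ((G.comp (Ring.inverse v)).comp (adjoint G))
      = (G.comp (Ring.inverse u)).comp (adjoint G) - (G.comp (Ring.inverse v)).comp (adjoint G) ∧
    ((G.comp (Ring.inverse v)).comp (adjoint G)) * ((G.comp (Ring.inverse u)).comp (adjoint G))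
      = (G.comp (Ring.inverse u)).comp (adjoint G) - (G.comp (Ring.inverse v)).comp (adjoint G) := by
  set S := adjoint G
  set r := Ring.inverse u
  set s := Ring.inverse v
  have hru : r.comp u = 1 := Ring.inverse_mul_cancel u hu
  have hur : u.comp r = 1 := Ring.mul_inverse_cancel u hu
  have hvs : v.comp s = 1 := Ring.mul_inverse_cancel v hv
  have hsv : s.comp v = 1 := Ring.inverse_mul_cancel v hv
  constructor
  · have h1 : ((G.comp r).comp S) * ((G.comp s).comp S)
        = G.comp ((r.comp ((S.comp G).comp s)).comp S) := rfl
    rw [h1, huv]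
    have h2 : (r.comp (((v - u)).comp s)) = r - s := by
      rw [sub_comp, comp_sub, hvs, ← comp_assoc r u s, hru]
      simp [ContinuousLinearMap.one_def]
    rw [h2, sub_comp, comp_sub, ← comp_assoc, ← comp_assoc]
  · have h1 : ((G.comp s).comp S) * ((G.comp r).comp S)
        = G.comp ((s.comp ((S.comp G).comp r)).comp S) := rfl
    rw [h1, huv]
    have h2 : (s.comp (((v - u)).comp r)) = r - s := by
      rw [sub_comp, comp_sub, hur, ← comp_assoc s v r, hsv]
      simp [ContinuousLinearMap.one_def]
    rw [h2, sub_comp, comp_sub, ← comp_assoc, ← comp_assoc]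

open ContinuousLinearMap in
lemma aux_key_identities (G : H →L[ℂ] K) {u v : H →L[ℂ] H} (hu : IsUnit u) (hv : IsUnit v)
    (huv : (adjoint G).comp G = v - u) :
    ((1 : K →L[ℂ] K) + (G.comp (Ring.inverse u)).comp (adjoint G)) *
      (1 - (G.comp (Ring.inverse v)).comp (adjoint G)) = 1 ∧
    ((1 : K →L[ℂ] K) - (G.comp (Ring.inverse v)).comp (adjoint G)) *
      (1 + (G.comp (Ring.inverse u)).comp (adjoint G)) = 1 := by
  obtain ⟨k1, k2⟩ := aux_key_prod G hu hv huv
  set X := (G.comp (Ring.inverse u)).comp (adjoint G)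
  set Y := (G.comp (Ring.inverse v)).comp (adjoint G)
  constructor
  · have h : (1 + X) * (1 - Y) = 1 + X - Y - X * Y := by noncomm_ring
    rw [h, k1]; abel
  · have h : (1 - Y) * (1 + X) = 1 + X - Y - Y * X := by noncomm_ring
    rw [h, k2]; abel

/-- The resolvent identities for the self-adjoint pair `A₀`, `A₁ = A₀ + G*G`:
`(I + G(A₀−z)⁻¹G*)(I − G(A₁−z)⁻¹G*) = I = (I − G(A₁−z)⁻¹G*)(I + G(A₀−z)⁻¹G*)`. -/
theorem selfadjoint_resolvent_identities (A₀ : H →L[ℂ] H) (hA₀ : IsSelfAdjoint A₀)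
    (G : H →L[ℂ] K) :
    ∀ z : ℂ, z.im ≠ 0 →
      IsUnit (A₀ - z • 1) ∧
      IsUnit ((A₀ + (ContinuousLinearMap.adjoint G).comp G) - z • 1) ∧
      ((1 : K →L[ℂ] K) +
          (G.comp (Ring.inverse (A₀ - z • 1))).comp (ContinuousLinearMap.adjoint G)) *
        ((1 : K →L[ℂ] K) -
          (G.comp (Ring.inverse ((A₀ + (ContinuousLinearMap.adjoint G).comp G) - z • 1))).comp
            (ContinuousLinearMap.adjoint G)) = 1 ∧
      ((1 : K →L[ℂ] K) -
          (G.comp (Ring.inverse ((A₀ + (ContinuousLinearMap.adjoint G).comp G) - z • 1))).comp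
            (ContinuousLinearMap.adjoint G)) *
        ((1 : K →L[ℂ] K) +
          (G.comp (Ring.inverse (A₀ - z • 1))).comp (ContinuousLinearMap.adjoint G)) = 1 := by
  intro z hz
  have hGG : IsSelfAdjoint ((ContinuousLinearMap.adjoint G).comp G) := by
    rw [ContinuousLinearMap.isSelfAdjoint_iff']
    rw [ContinuousLinearMap.adjoint_comp, ContinuousLinearMap.adjoint_adjoint]
  have hA₁ : IsSelfAdjoint (A₀ + (ContinuousLinearMap.adjoint G).comp G) := hA₀.add hGG
  have hu : IsUnit (A₀ - z • 1) := aux_isUnit_sub_smul_one hA₀ hz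
  have hv : IsUnit ((A₀ + (ContinuousLinearMap.adjoint G).comp G) - z • 1) :=
    aux_isUnit_sub_smul_one hA₁ hz
  have huv : (ContinuousLinearMap.adjoint G).comp G =
      ((A₀ + (ContinuousLinearMap.adjoint G).comp G) - z • 1) - (A₀ - z • 1) := by abel
  obtain ⟨h1, h2⟩ := aux_key_identities G hu hv huv
  exact ⟨hu, hv, h1, h2⟩
end
end
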